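/- Let f : ℝ → ℝ be convex and differentiable, let x₀ ≤ r be real numbers with f'(x) < 0 for all x ∈ [x₀, r], let h = f(r), and assume f(x₀) ≥ h. Define the Newton sequence by x_{i+1} = x_i − (f(x_i) − h)/f'(x_i). Then for every i ≥ 0 one has x₀ ≤ x_i ≤ x_{i+1} ≤ r and f(x_i) ≥ h; i.e., the Newton iterates form a nondecreasing sequence contained in [x₀, r] which never overshoots the root r of f(x) = h. -/
import Mathlib

lemma tangent_le (f : ℝ → ℝ) (hconv : ConvexOn ℝ Set.univ f) (hdiff : Differentiable ℝ f)
    {x y : ℝ} (hxy : x ≤ y) : f x + deriv f x * (y - x) ≤ f y := by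
  rcases eq_or_lt_of_le hxy with rfl | hlt
  · simp
  · have := hconv.deriv_le_slope (Set.mem_univ x) (Set.mem_univ y) hlt (hdiff x)
    rw [slope_def_field] at this
    have hpos : (0:ℝ) < y - x := by linarith
    rw [le_div_iff₀ hpos] at this
    linarith

/-- The Newton iteration x_{i+1} = x_i − (f(x_i) − h)/f'(x_i) for a
convex differentiable f with negative derivative on [x₀, r], h = f(r) and
f(x₀) ≥ h, produces a nondecreasing sequence contained in [x₀, r] that never
overshoots the root r, with f(x_i) ≥ h for all i. -/
theorem newton_iterates_monotone_bounded
    (f : ℝ → ℝ) (hconv : ConvexOn ℝ Set.univ f) (hdiff : Differentiable ℝ f)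
    (x₀ r : ℝ) (hx₀r : x₀ ≤ r)
    (hderiv : ∀ x ∈ Set.Icc x₀ r, deriv f x < 0)
    (h : ℝ) (hh : h = f r) (hfx₀ : f x₀ ≥ h)
    (xs : ℕ → ℝ) (hxs0 : xs 0 = x₀)
    (hxs : ∀ i, xs (i + 1) = xs i - (f (xs i) - h) / deriv f (xs i)) :
    ∀ i, x₀ ≤ xs i ∧ xs i ≤ xs (i + 1) ∧ xs (i + 1) ≤ r ∧ f (xs i) ≥ h := by
  -- key step lemma
  have key : ∀ x, x₀ ≤ x → x ≤ r → f x ≥ h →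
      x ≤ x - (f x - h) / deriv f x ∧ x - (f x - h) / deriv f x ≤ r ∧
        f (x - (f x - h) / deriv f x) ≥ h := by
    intro x hx1 hx2 hfx
    have hd : deriv f x < 0 := hderiv x ⟨hx1, hx2⟩
    have hstep : (0:ℝ) ≤ -((f x - h) / deriv f x) := by
      rw [neg_nonneg]
      exact div_nonpos_of_nonneg_of_nonpos (by linarith) hd.le
    have h1 : x ≤ x - (f x - h) / deriv f x := by linarith
    have h2 : x - (f x - h) / deriv f x ≤ r := by
      have := tangent_le f hconv hdiff hx2
      -- f x + f' x * (r - x) ≤ f r = h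
      have h3 : deriv f x * (r - x) ≤ h - f x := by linarith [hh ▸ this]
      have h4 : (h - f x) / deriv f x ≤ r - x := by
        rw [div_le_iff_of_neg hd]
        nlinarith
      have : -((f x - h) / deriv f x) = (h - f x) / deriv f x := by ring
      linarith [this ▸ h4]
    have h3 : f (x - (f x - h) / deriv f x) ≥ h := by
      have := tangent_le f hconv hdiff h1
      have hne : deriv f x ≠ 0 := hd.ne
      have : f x + deriv f x * (-((f x - h) / deriv f x)) ≤
          f (x - (f x - h) / deriv f x) := by
        convert this using 3; ring
      rw [mul_neg, mul_div_cancel₀ _ hne] at this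
      linarith
    exact ⟨h1, h2, h3⟩
  have inv : ∀ i, x₀ ≤ xs i ∧ xs i ≤ r ∧ f (xs i) ≥ h := by
    intro i
    induction i with
    | zero => exact ⟨hxs0.ge, hxs0 ▸ hx₀r, hxs0 ▸ hfx₀⟩
    | succ n ih =>
      obtain ⟨h1, h2, h3⟩ := ih
      obtain ⟨k1, k2, k3⟩ := key _ h1 h2 h3
      rw [hxs n]
      exact ⟨h1.trans k1, k2, k3⟩
  intro i
  obtain ⟨h1, h2, h3⟩ := inv i
  obtain ⟨k1, k2, _⟩ := key _ h1 h2 h3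
  rw [hxs i]
  exact ⟨h1, k1, k2, h3⟩
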